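/- arXiv:2403.04049 — 3 statements merged into one kernel-verified Lean document; each statement's English description precedes it below -/
import Mathlib

section
/- In the Euclidean plane ℂ, let O = 0, A = a, and B = b·exp(iπ/5), where a = 2cos(2π/5) and b = 2cos(π/5). Then the unoriented angle ∠OAB at the vertex A (between the rays from A to O and from A to B) equals 7π/10. (Part of Claim 1.1: T is the rational triangle (1,2,7).) -/
open Real

/-!
Writing `θ = π/5`, one has `B - A = 2cos θ·e^{iθ} - 2cos 2θ = 2 sin θ·e^{i(π/2 - θ)}`, so seen
from `A` the point `B` lies in direction `3π/10` while `O` lies in direction `π`; the angle at `A`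
is therefore `π - 3π/10 = 7π/10`.
-/

open Complex InnerProductGeometry in
theorem angle_ofReal_ofReal_mul_exp_mul_I {a r φ : ℝ} (ha : 0 < a) (hr : 0 < r)
    (hφ : φ ∈ Set.Ioc (-π) π) : angle (a : ℂ) (r * exp (φ * I)) = |φ| := by
  rw [← mul_one (a : ℂ), ← real_smul, ← real_smul, angle_smul_left_of_pos _ _ ha,
    angle_smul_right_of_pos _ _ hr, angle_one_left (exp_ne_zero _), arg_exp_mul_I,
    (toIocMod_eq_self _).2 (by rwa [neg_add_eq_sub, two_mul, add_sub_cancel_right])]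

open Complex in
theorem two_cos_mul_exp_mul_I_sub_two_cos_two_mul (θ : ℝ) :
    (2 * Real.cos θ : ℝ) * exp (θ * I) - (2 * Real.cos (2 * θ) : ℝ) =
      (2 * Real.sin θ : ℝ) * exp ((π / 2 - θ : ℝ) * I) := by
  apply Complex.ext <;>
    simp only [sub_re, sub_im, mul_re, mul_im, ofReal_re, ofReal_im,
      exp_ofReal_mul_I_re, exp_ofReal_mul_I_im, Real.cos_pi_div_two_sub, Real.sin_pi_div_two_sub,
      Real.cos_two_mul]
  · linear_combination (-2) * Real.sin_sq_add_cos_sq θ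
  · ring

/-- Claim 1.1 (angle at `A`): in the triangle with vertices `O = 0`, `A = a`,
`B = b·exp(iπ/5)` in `ℂ`, where `a = 2cos(2π/5)` and `b = 2cos(π/5)`, the
unoriented angle `∠OAB` at the vertex `A` equals `7π/10`. -/
theorem claim_1_1_angle_at_A (a b : ℝ)
    (ha : a = 2 * Real.cos (2 * π / 5)) (hb : b = 2 * Real.cos (π / 5)) :
    EuclideanGeometry.angle (0 : ℂ) (a : ℂ)
      ((b : ℂ) * Complex.exp ((π : ℂ) * Complex.I / 5)) = 7 * π / 10 := by
  have ha_pos : 0 < a := by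
    rw [ha]
    have := cos_pos_of_mem_Ioo (x := 2 * π / 5) ⟨by linarith [pi_pos], by linarith [pi_pos]⟩
    positivity
  have hr_pos : 0 < 2 * sin (π / 5) := by
    have := sin_pos_of_pos_of_lt_pi (x := π / 5) (by positivity) (by linarith [pi_pos])
    positivity
  have hAB : (b : ℂ) * Complex.exp ((π : ℂ) * Complex.I / 5) - a
      = (2 * sin (π / 5) : ℝ) * Complex.exp ((3 * π / 10 : ℝ) * Complex.I) := by
    rw [ha, hb, show (π : ℂ) * Complex.I / 5 = (π / 5 : ℝ) * Complex.I by push_cast; ring,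
      show 2 * π / 5 = 2 * (π / 5) by ring, show 3 * π / 10 = π / 2 - π / 5 by ring]
    exact two_cos_mul_exp_mul_I_sub_two_cos_two_mul (π / 5)
  rw [EuclideanGeometry.angle, vsub_eq_sub, vsub_eq_sub, zero_sub, hAB,
    InnerProductGeometry.angle_neg_left,
    angle_ofReal_ofReal_mul_exp_mul_I ha_pos hr_pos ⟨by linarith [pi_pos], by linarith [pi_pos]⟩,
    abs_of_pos (by positivity)]
  ring
end

section
/- In the Euclidean plane ℂ, let O = 0, A = a, and B = b·exp(iπ/5), where a = 2cos(2π/5) and b = 2cos(π/5). Then the unoriented angle ∠ABO at the vertex B (between the rays from B to A and from B to O) equals π/10. (Part of Claim 1.1: T is the rational triangle (1,2,7).) -/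
open Real

/-!
With `θ = π/5`, `A = 2 cos 2θ` and `B = 2 cos θ · e^{iθ}`, the two sides at `B` have polar forms
`A - B = 2 sin θ · e^{-i(θ + π/2)}` and `O - B = 2 cos θ · e^{i(θ - π)}`. For `0 < θ < π/2` both
moduli are positive, so `∠ABO` is the difference of the arguments, `|π/2 - 2θ|`, which is `π/10`.
-/

namespace Complex

theorem angle_ofReal_mul_exp_mul_I {r t : ℝ} (hr : 0 < r) (ht : 0 < t) (x y : ℝ) :
    InnerProductGeometry.angle (r * exp (x * I)) (t * exp (y * I)) =
      |toIocMod two_pi_pos (-π) (x - y)| := by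
  rw [← real_smul (x := r), ← real_smul (x := t),
    InnerProductGeometry.angle_smul_left_of_pos _ _ hr,
    InnerProductGeometry.angle_smul_right_of_pos _ _ ht, angle_exp_exp]

theorem two_cos_two_mul_sub_two_cos_mul_exp (θ : ℝ) :
    ((2 * Real.cos (2 * θ) : ℝ) : ℂ) - (2 * Real.cos θ : ℝ) * exp (θ * I) =
      (2 * Real.sin θ : ℝ) * exp (↑(-(θ + π / 2)) * I) := by
  rw [exp_mul_I, exp_mul_I, Real.cos_two_mul]
  push_cast
  rw [cos_neg, sin_neg, cos_add_pi_div_two, sin_add_pi_div_two]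
  linear_combination (2 : ℂ) * sin_sq_add_cos_sq (θ : ℂ)

theorem zero_sub_two_cos_mul_exp (θ : ℝ) :
    0 - (2 * Real.cos θ : ℝ) * exp (θ * I) = (2 * Real.cos θ : ℝ) * exp (↑(θ - π) * I) := by
  rw [ofReal_sub, sub_mul, Complex.exp_sub, exp_pi_mul_I]
  ring

theorem angle_two_cos_two_mul_two_cos_mul_exp_zero {θ : ℝ} (hθ₀ : 0 < θ) (hθ : θ < π / 2) :
    EuclideanGeometry.angle ((2 * Real.cos (2 * θ) : ℝ) : ℂ)
      ((2 * Real.cos θ : ℝ) * exp (θ * I)) 0 = |π / 2 - 2 * θ| := by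
  have hsin : 0 < 2 * Real.sin θ := by
    have := Real.sin_pos_of_pos_of_lt_pi hθ₀ (by linarith [Real.pi_pos])
    positivity
  have hcos : 0 < 2 * Real.cos θ := by
    have := Real.cos_pos_of_mem_Ioo ⟨by linarith, hθ⟩
    positivity
  rw [EuclideanGeometry.angle, vsub_eq_sub, vsub_eq_sub, two_cos_two_mul_sub_two_cos_mul_exp,
    zero_sub_two_cos_mul_exp, angle_ofReal_mul_exp_mul_I hsin hcos, (toIocMod_eq_self _).2]
  · congr 1
    ring
  · constructor <;> linarith

end Complex

/-- Claim 1.1 (angle at `B`): in the triangle with vertices `O = 0`, `A = a`,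
`B = b·exp(iπ/5)` in `ℂ`, where `a = 2cos(2π/5)` and `b = 2cos(π/5)`, the
unoriented angle `∠ABO` at the vertex `B` equals `π/10`. -/
theorem claim_1_1_angle_at_B (a b : ℝ)
    (ha : a = 2 * Real.cos (2 * π / 5)) (hb : b = 2 * Real.cos (π / 5)) :
    EuclideanGeometry.angle (a : ℂ)
      ((b : ℂ) * Complex.exp ((π : ℂ) * Complex.I / 5)) (0 : ℂ) = π / 10 := by
  have hA : 2 * π / 5 = 2 * (π / 5) := by ring
  have hB : (π : ℂ) * Complex.I / 5 = ((π / 5 : ℝ) : ℂ) * Complex.I := by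
    push_cast
    ring
  rw [ha, hb, hA, hB,
    Complex.angle_two_cos_two_mul_two_cos_mul_exp_zero (by positivity) (by linarith [pi_pos]),
    abs_of_pos (by linarith [pi_pos])]
  ring
end

section
/- Let a = 2cos(2π/5) and b = 2cos(π/5). In ℂ, the point A' = a·exp(2πi/5) lies on the closed segment from A = a to B' = b·exp(3πi/5); in particular the three points a, a·exp(2πi/5), and b·exp(3πi/5) are collinear over ℝ. (This is the key collinearity in Lemma 1.2: the segments AA' and A'B' form a single segment AB', so K is a star.) -/
open Real

/-- Lemma 1.2 (key collinearity): with `a = 2cos(2π/5)` and `b = 2cos(π/5)`,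
the point `A' = a·exp(2πi/5)` lies on the closed segment from `A = a` to
`B' = b·exp(3πi/5)`; in particular `A`, `A'`, `B'` are collinear over `ℝ`. -/
theorem lemma_1_2_collinear (a b : ℝ)
    (ha : a = 2 * Real.cos (2 * π / 5)) (hb : b = 2 * Real.cos (π / 5)) :
    (a : ℂ) * Complex.exp (2 * (π : ℂ) * Complex.I / 5) ∈
      segment ℝ ((a : ℂ)) ((b : ℂ) * Complex.exp (3 * (π : ℂ) * Complex.I / 5)) ∧
    Collinear ℝ ({(a : ℂ), (a : ℂ) * Complex.exp (2 * (π : ℂ) * Complex.I / 5),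
      (b : ℂ) * Complex.exp (3 * (π : ℂ) * Complex.I / 5)} : Set ℂ) := by
  have hpi := Real.pi_pos
  have hc1 : 0 < Real.cos (π / 5) := by
    apply Real.cos_pos_of_mem_Ioo
    constructor <;> [linarith; linarith]
  have hc2 : 0 < Real.cos (2 * π / 5) := by
    apply Real.cos_pos_of_mem_Ioo
    constructor <;> [linarith; linarith]
  have hb0 : (0:ℝ) < b := by rw [hb]; linarith
  have ha0 : (0:ℝ) < a := by rw [ha]; linarith
  -- cube relation
  have h3 : Real.cos (3 * (π / 5)) = -Real.cos (2 * π / 5) := by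
    rw [show 3 * (π / 5) = π - 2 * π / 5 by ring, Real.cos_pi_sub]
  have hcube := Real.cos_three_mul (π / 5)
  have hdouble := Real.cos_two_mul (π / 5)
  have hdouble' : Real.cos (2 * π / 5) = 2 * Real.cos (π / 5) ^ 2 - 1 := by
    rw [show 2 * π / 5 = 2 * (π / 5) by ring]; exact hdouble
  have hrel : 4 * Real.cos (π/5)^3 + 2 * Real.cos (π/5)^2 - 3 * Real.cos (π/5) - 1 = 0 := by
    rw [h3, hdouble'] at hcube
    linarith
  have key : a * b = b - a := by
    rw [ha, hb, hdouble']
    linear_combination 2 * hrel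
  have hab : a ≤ b := by
    nlinarith
  set t : ℝ := a / b with ht
  have ht0 : (0:ℝ) ≤ t := by positivity
  have ht1 : t ≤ 1 := by rw [ht, div_le_one hb0]; exact hab
  have hs : Real.sin (3 * π / 5) = Real.sin (2 * π / 5) := by
    rw [show 3 * π / 5 = π - 2 * π / 5 by ring, Real.sin_pi_sub]
  have hc3 : Real.cos (3 * π / 5) = -Real.cos (2 * π / 5) := by
    rw [show 3 * π / 5 = 3 * (π / 5) by ring]; exact h3
  have e2 : Complex.exp (2 * (π : ℂ) * Complex.I / 5)
      = (Real.cos (2 * π / 5) : ℂ) + (Real.sin (2 * π / 5) : ℂ) * Complex.I := by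
    rw [show 2 * (π : ℂ) * Complex.I / 5 = ((2 * π / 5 : ℝ) : ℂ) * Complex.I by
      push_cast; ring, Complex.exp_mul_I]
    push_cast
    simp [Complex.cos_ofReal_re, Complex.sin_ofReal_re]
  have e3 : Complex.exp (3 * (π : ℂ) * Complex.I / 5)
      = (Real.cos (3 * π / 5) : ℂ) + (Real.sin (3 * π / 5) : ℂ) * Complex.I := by
    rw [show 3 * (π : ℂ) * Complex.I / 5 = ((3 * π / 5 : ℝ) : ℂ) * Complex.I by
      push_cast; ring, Complex.exp_mul_I]
    push_cast
    simp
  have htb : t * b = a := by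
    rw [ht]; field_simp
  clear_value t
  have hre : a * Real.cos (2 * π / 5)
      = (1 - t) * a + t * b * (-Real.cos (2 * π / 5)) := by
    have h2 : Real.cos (2 * π / 5) = a / 2 := by rw [ha]; ring
    rw [h2]
    have : 2 * (a * (a / 2)) * b = 2 * ((1 - t) * a + t * b * -(a / 2)) * b := by
      have h4 : t * b * a = a * a := by rw [htb]
      nlinarith [key, h4]
    have := mul_right_cancel₀ (ne_of_gt hb0) this
    linarith
  have heq : (a : ℂ) * Complex.exp (2 * (π : ℂ) * Complex.I / 5)
      = (1 - t) • (a : ℂ) + t • ((b : ℂ) * Complex.exp (3 * (π : ℂ) * Complex.I / 5)) := by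
    rw [e2, e3, hs, hc3, Complex.real_smul, Complex.real_smul]
    apply Complex.ext <;>
      simp only [Complex.ofReal_neg, Complex.add_re, Complex.add_im, Complex.mul_re,
        Complex.mul_im, Complex.ofReal_re, Complex.ofReal_im, Complex.I_re, Complex.I_im,
        Complex.sub_re, Complex.sub_im, Complex.one_re, Complex.one_im, Complex.neg_re,
        Complex.neg_im]
    · linear_combination hre
    · linear_combination -Real.sin (2 * π / 5) * htb
  refine ⟨⟨1 - t, t, by linarith, ht0, by ring, heq.symm⟩, ?_⟩
  rw [Set.insert_comm]
  apply collinear_insert_of_mem_affineSpan_pair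
  rw [heq, ← AffineMap.lineMap_apply_module]
  exact AffineMap.lineMap_mem_affineSpan_pair t _ _
end
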